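/- arXiv:1209.2181 — 4 statements merged into one kernel-verified Lean document; each statement's English description precedes it below -/
import Mathlib

section
/- In the admissible-family setting, there is a constant C₁ > 0, independent of n, such that the operators W_n, X_n, Y_n on L¹(ν×θ) all have operator norm at most C₁; that is, ‖W_n f‖₁ ≤ C₁‖f‖₁, ‖X_n f‖₁ ≤ C₁‖f‖₁ and ‖Y_n f‖₁ ≤ C₁‖f‖₁ for every n and every f ∈ L¹(ν×θ). -/
open MeasureTheory Filter Set
open scoped ENNReal

/-- The Radon–Nikodym derivative `dν∘g/dν` of the action `a`, where
`(ν∘g)(A) = ν(g • A)`, i.e. the derivative of the pushforward of `ν` by `a g⁻¹`. -/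
noncomputable def rnD {Γ B : Type} [Group Γ] [MeasurableSpace B] (a : Γ → B → B)
    (ν : Measure B) (g : Γ) : B → ℝ≥0∞ :=
  (ν.map (a g⁻¹)).rnDeriv ν

/-- A nonsingular Borel action of `Γ` on `(B,ν)`. -/
def IsNonsingularAction {Γ B : Type} [Group Γ] [MeasurableSpace B] (a : Γ → B → B)
    (ν : Measure B) : Prop :=
  (∀ g : Γ, Measurable (a g)) ∧ (∀ b : B, a 1 b = b) ∧
    (∀ (g h : Γ) (b : B), a (g * h) b = a g (a h b)) ∧
    (∀ g : Γ, ν.map (a g) ≪ ν ∧ ν ≪ ν.map (a g))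

/-- The ratio set `RS(Γ ↷ (B,ν)) ⊆ [0,∞]`. -/
def ratioSet {Γ B : Type} [Group Γ] [MeasurableSpace B] (a : Γ → B → B) (ν : Measure B) :
    Set ℝ≥0∞ :=
  {t | (t ≠ ∞ ∧
      ∀ A : Set B, MeasurableSet A → 0 < ν A → ∀ ε : ℝ, 0 < ε →
        ∃ A' : Set B, A' ⊆ A ∧ MeasurableSet A' ∧ 0 < ν A' ∧
          ∃ g : Γ, g ≠ 1 ∧ (∀ b ∈ A', a g b ∈ A) ∧
            (∀ᵐ b ∂ν, b ∈ A' → rnD a ν g b ≠ ∞ ∧ |(rnD a ν g b).toReal - t.toReal| < ε)) ∨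
    (t = ∞ ∧
      ∀ A : Set B, MeasurableSet A → 0 < ν A → ∀ n : ℝ, 0 < n →
        ∃ A' : Set B, A' ⊆ A ∧ MeasurableSet A' ∧ 0 < ν A' ∧
          ∃ g : Γ, g ≠ 1 ∧ (∀ b ∈ A', a g b ∈ A) ∧
            (∀ᵐ b ∂ν, b ∈ A' → ENNReal.ofReal n < rnD a ν g b))}

/-- An admissible family of integral kernels for the nonsingular action `a` of `Γ`
on `(B,ν)`, with logarithmic Radon–Nikodym cocycle `R`; `C` is the uniform bound of
condition (3). -/
def IsAdmissibleFamily {Γ B : Type} [Group Γ] [MetricSpace B] [MeasurableSpace B]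
    (a : Γ → B → B) (ν : Measure B) (R : Γ → B → ℝ)
    (Υ : ℕ → Γ → B → B → ℝ) (C : ℝ) : Prop :=
  0 < C ∧
  (∀ (n : ℕ) (g : Γ) (b b' : B), 0 ≤ Υ n g b b') ∧
  (∀ (n : ℕ) (g : Γ), Measurable (fun p : B × B => Υ n g p.1 p.2)) ∧
  -- (1) each `Υ n (·, b, ·)` is a probability density
  (∀ (n : ℕ) (b : B), ∑' g : Γ, ∫⁻ b', ENNReal.ofReal (Υ n g b b') ∂ν = 1) ∧
  -- (2) supports shrink
  (∃ β : ℕ → ℝ, Tendsto β atTop (nhds 0) ∧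
    ∀ (n : ℕ) (g : Γ) (b b' : B), 0 < Υ n g b b' →
      dist b b' ≤ β n ∧ dist (a g⁻¹ b) (a g⁻¹ b') ≤ β n) ∧
  -- (3) uniform bound on the cocycle on the support
  (∀ (n : ℕ) (g : Γ), ∀ᵐ b ∂ν, ∀ᵐ b' ∂ν, 0 < Υ n g b b' →
      |R g⁻¹ b| + |R g⁻¹ b'| ≤ C) ∧
  -- (4) uniform integral bounds
  (∃ C₄ : ℝ, 0 < C₄ ∧
    (∀ n : ℕ, ∀ᵐ b' ∂ν,
      ∫⁻ b, ∑' g : Γ, ENNReal.ofReal (Υ n g b b') ∂ν ≤ ENNReal.ofReal C₄) ∧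
    (∀ n : ℕ, ∀ᵐ b' ∂ν,
      ∫⁻ b, ∑' g : Γ, ENNReal.ofReal (Υ n g b (a g b')) * rnD a ν g b' ∂ν
        ≤ ENNReal.ofReal C₄) ∧
    (∀ n : ℕ, ∀ᵐ b ∂ν,
      ∫⁻ b', ∑' g : Γ, ENNReal.ofReal (Υ n g (a g b) b') * rnD a ν g b ∂ν
        ≤ ENNReal.ofReal C₄))

/-- The operator `W_n`: `(W_n f)(b,t) = Σ_g ∫ f(b',t) Υ_n(g,b,b') dν(b')`. -/
noncomputable def Wop {Γ B : Type} [MeasurableSpace B] (ν : Measure B)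
    (Υ : ℕ → Γ → B → B → ℝ) (n : ℕ) (f : B × ℝ → ℝ) (p : B × ℝ) : ℝ :=
  ∑' g : Γ, ∫ b', f (b', p.2) * Υ n g p.1 b' ∂ν

/-- The operator `X_n`: `(X_n f)(b,t) = Σ_g ∫ f(g⁻¹b', t + R(g⁻¹,b')) Υ_n(g,b,b') dν(b')`. -/
noncomputable def Xop {Γ B : Type} [Group Γ] [MeasurableSpace B] (a : Γ → B → B)
    (ν : Measure B) (R : Γ → B → ℝ) (Υ : ℕ → Γ → B → B → ℝ) (n : ℕ)
    (f : B × ℝ → ℝ) (p : B × ℝ) : ℝ :=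
  ∑' g : Γ, ∫ b', f (a g⁻¹ b', p.2 + R g⁻¹ b') * Υ n g p.1 b' ∂ν

/-- The operator `Y_n`: `(Y_n f)(b,t) = Σ_g ∫ f(g⁻¹b, t + R(g⁻¹,b')) Υ_n(g,b,b') dν(b')`. -/
noncomputable def Yop {Γ B : Type} [Group Γ] [MeasurableSpace B] (a : Γ → B → B)
    (ν : Measure B) (R : Γ → B → ℝ) (Υ : ℕ → Γ → B → B → ℝ) (n : ℕ)
    (f : B × ℝ → ℝ) (p : B × ℝ) : ℝ :=
  ∑' g : Γ, ∫ b', f (a g⁻¹ p.1, p.2 + R g⁻¹ b') * Υ n g p.1 b' ∂ν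

/-- The operator `Z_n`:
`(Z_n f)(b,t) = Σ_g ∫ f(b, t + R(g⁻¹,b') − R(g⁻¹,b)) Υ_n(g,b,b') dν(b')`. -/
noncomputable def Zop {Γ B : Type} [Group Γ] [MeasurableSpace B] (a : Γ → B → B)
    (ν : Measure B) (R : Γ → B → ℝ) (Υ : ℕ → Γ → B → B → ℝ) (n : ℕ)
    (f : B × ℝ → ℝ) (p : B × ℝ) : ℝ :=
  ∑' g : Γ, ∫ b', f (p.1, p.2 + R g⁻¹ b' - R g⁻¹ p.1) * Υ n g p.1 b' ∂ν

/-!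
Since `f` is only a.e. measurable, first dominate `|f|` everywhere by a measurable `ψ` with the
same integral; each operator is then dominated by a positive integral operator applied to `ψ`,
whose integral is computed by Tonelli. For `X_n` and `Y_n` the cocycle shift in `t` costs at
most the factor `C'`, by the support condition (3) and the bound on `d(θ ∘ A_{t₀})/dθ`; the
change of variables `b ↦ g⁻¹ b` then produces the Radon–Nikodym factors that condition (4)
controls.
-/

theorem AEMeasurable.exists_measurable_ge_ae_eq {α : Type*} [MeasurableSpace α] {μ : Measure α}
    {f : α → ℝ≥0∞} (hf : AEMeasurable f μ) :
    ∃ g : α → ℝ≥0∞, Measurable g ∧ f ≤ g ∧ g =ᵐ[μ] f := by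
  obtain ⟨s, hfs, hs, hs0⟩ := exists_measurable_superset_of_null hf.ae_eq_mk
  refine ⟨fun x => hf.mk f x + s.indicator (fun _ => ∞) x,
    hf.measurable_mk.add (measurable_const.indicator hs), fun x => ?_, ?_⟩
  · by_cases hx : x ∈ s
    · simp [hx]
    · have hfx : f x = hf.mk f x := not_not.1 fun h => hx (hfs h)
      simp [hx, hfx]
  · filter_upwards [measure_eq_zero_iff_ae_notMem.1 hs0, hf.ae_eq_mk] with x hx hfx
    simp [hx, hfx]

theorem lintegral_comp_eq_lintegral_rnDeriv_map_mul {α : Type*} [MeasurableSpace α]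
    {μ : Measure α} [IsFiniteMeasure μ] {T : α → α} (hT : Measurable T) (hac : μ.map T ≪ μ)
    {k : α → ℝ≥0∞} (hk : Measurable k) :
    ∫⁻ x, k (T x) ∂μ = ∫⁻ x, (μ.map T).rnDeriv μ x * k x ∂μ := by
  rw [lintegral_rnDeriv_mul hac hk.aemeasurable, lintegral_map hk hT]

theorem Measure.map_add_right_absolutelyContinuous {G : Type*} [AddGroup G] [MeasurableSpace G]
    [MeasurableAdd G] {μ θ : Measure G} [μ.IsAddRightInvariant] (hθμ : θ ≪ μ) (hμθ : μ ≪ θ)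
    (s : G) : θ.map (· + s) ≪ θ := by
  have h := hθμ.map (measurable_add_const s)
  rw [map_add_right_eq_self μ s] at h
  exact h.trans hμθ

theorem lintegral_comp_add_right_mul_le {θ : Measure ℝ} [IsFiniteMeasure θ]
    (hθ : θ ≪ volume ∧ volume ≪ θ) {C C' : ℝ}
    (hθshift : ∀ t₀ : ℝ, |t₀| ≤ C →
      ∀ᵐ r ∂θ, (θ.map (fun s => s - t₀)).rnDeriv θ r ≤ ENNReal.ofReal C')
    {k : ℝ → ℝ≥0∞} (hk : Measurable k) {s : ℝ} {κ : ℝ≥0∞} (hs : κ ≠ 0 → |s| ≤ C) :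
    (∫⁻ t, k (t + s) ∂θ) * κ ≤ ENNReal.ofReal C' * (∫⁻ t, k t ∂θ) * κ := by
  rcases eq_or_ne κ 0 with rfl | hκ
  · simp
  have hrn : ∀ᵐ r ∂θ, (θ.map (· + s)).rnDeriv θ r ≤ ENNReal.ofReal C' := by
    simpa [sub_neg_eq_add] using hθshift (-s) (by rw [abs_neg]; exact hs hκ)
  gcongr
  calc ∫⁻ t, k (t + s) ∂θ
      = ∫⁻ t, (θ.map (· + s)).rnDeriv θ t * k t ∂θ :=
        lintegral_comp_eq_lintegral_rnDeriv_map_mul (measurable_add_const s)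
          (Measure.map_add_right_absolutelyContinuous hθ.1 hθ.2 s) hk
    _ ≤ ∫⁻ t, ENNReal.ofReal C' * k t ∂θ := lintegral_mono_ae (hrn.mono fun t ht => by gcongr)
    _ = ENNReal.ofReal C' * ∫⁻ t, k t ∂θ := lintegral_const_mul _ hk

theorem IsNonsingularAction.apply_apply_inv {Γ B : Type} [Group Γ] [MeasurableSpace B]
    {a : Γ → B → B} {ν : Measure B} (hact : IsNonsingularAction a ν) (g : Γ) (x : B) :
    a g (a g⁻¹ x) = x := by
  rw [← hact.2.2.1, mul_inv_cancel, hact.2.1]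

theorem lintegral_tsum_mul_const {ι α : Type*} [Countable ι] [MeasurableSpace α]
    {μ : Measure α} {F : ι → α → ℝ≥0∞} (hF : ∀ i, Measurable (F i)) (r : ι → ℝ≥0∞) :
    ∫⁻ x, ∑' i, F i x * r i ∂μ = ∑' i, (∫⁻ x, F i x ∂μ) * r i := by
  rw [lintegral_tsum fun i => ((hF i).mul_const _).aemeasurable]
  exact tsum_congr fun i => lintegral_mul_const _ (hF i)

section KernelOperators

variable {Γ B : Type} [MeasurableSpace B] {ν : Measure B}

theorem tsum_lintegral_comp_inv_mul_le [Group Γ] [Countable Γ] [IsFiniteMeasure ν]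
    {a : Γ → B → B} (hact : IsNonsingularAction a ν) {Ψ : B → ℝ≥0∞} (hΨ : Measurable Ψ)
    {L : Γ → B → ℝ≥0∞} (hL : ∀ g, Measurable (L g)) {c : ℝ≥0∞}
    (hc : ∀ᵐ x ∂ν, ∑' g, L g (a g x) * rnD a ν g x ≤ c) :
    ∑' g, ∫⁻ b, Ψ (a g⁻¹ b) * L g b ∂ν ≤ c * ∫⁻ x, Ψ x ∂ν := by
  have hLg : ∀ g, Measurable fun x => L g (a g x) := fun g => (hL g).comp (hact.1 g)
  have hcov : ∀ g, ∫⁻ b, Ψ (a g⁻¹ b) * L g b ∂ν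
      = ∫⁻ x, Ψ x * (L g (a g x) * rnD a ν g x) ∂ν := fun g => by
    calc ∫⁻ b, Ψ (a g⁻¹ b) * L g b ∂ν
        = ∫⁻ b, Ψ (a g⁻¹ b) * L g (a g (a g⁻¹ b)) ∂ν := by
          simp only [hact.apply_apply_inv]
      _ = ∫⁻ x, rnD a ν g x * (Ψ x * L g (a g x)) ∂ν :=
          lintegral_comp_eq_lintegral_rnDeriv_map_mul (hact.1 g⁻¹) (hact.2.2.2 g⁻¹).1
            (hΨ.mul (hLg g))
      _ = ∫⁻ x, Ψ x * (L g (a g x) * rnD a ν g x) ∂ν := lintegral_congr fun x => by ring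
  calc ∑' g, ∫⁻ b, Ψ (a g⁻¹ b) * L g b ∂ν
      = ∫⁻ x, Ψ x * ∑' g, L g (a g x) * rnD a ν g x ∂ν := by
        simp_rw [hcov, ← ENNReal.tsum_mul_left]
        exact (lintegral_tsum fun g =>
          (hΨ.mul ((hLg g).mul (Measure.measurable_rnDeriv _ _))).aemeasurable).symm
    _ ≤ ∫⁻ x, Ψ x * c ∂ν := lintegral_mono_ae (hc.mono fun x hx => by gcongr)
    _ = c * ∫⁻ x, Ψ x ∂ν := by rw [lintegral_mul_const _ hΨ, mul_comm]

noncomputable def kernelOp (ν : Measure B) (K : Γ → B → B → ℝ≥0∞)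
    (v : Γ → B × ℝ → B → B × ℝ) (ψ : B × ℝ → ℝ≥0∞) (p : B × ℝ) : ℝ≥0∞ :=
  ∑' g, ∫⁻ b', ψ (v g p b') * K g p.1 b' ∂ν

theorem eLpNorm_one_le_lintegral_kernelOp (μ : Measure (B × ℝ)) {Υ : Γ → B → B → ℝ}
    (hΥ : ∀ g b b', 0 ≤ Υ g b b') (v : Γ → B × ℝ → B → B × ℝ) {f : B × ℝ → ℝ}
    {ψ : B × ℝ → ℝ≥0∞} (hfψ : ∀ p, ‖f p‖ₑ ≤ ψ p) :
    eLpNorm (fun p => ∑' g, ∫ b', f (v g p b') * Υ g p.1 b' ∂ν) 1 μ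
      ≤ ∫⁻ p, kernelOp ν (fun g b b' => ENNReal.ofReal (Υ g b b')) v ψ p ∂μ := by
  rw [eLpNorm_one_eq_lintegral_enorm]
  refine lintegral_mono fun p => enorm_tsum_le_tsum_enorm.trans
    (ENNReal.tsum_le_tsum fun g => (enorm_integral_le_lintegral_enorm _).trans
      (lintegral_mono fun b' => ?_))
  rw [enorm_mul, Real.enorm_eq_ofReal (hΥ g p.1 b')]
  gcongr
  exact hfψ _

theorem lintegral_kernelOp [Countable Γ] (θ : Measure ℝ) [SFinite ν] [SFinite θ]
    {K : Γ → B → B → ℝ≥0∞} (hK : ∀ g, Measurable fun q : B × B => K g q.1 q.2)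
    {v : Γ → B × ℝ → B → B × ℝ} {ψ : B × ℝ → ℝ≥0∞}
    (hψv : ∀ g, Measurable fun q : (B × ℝ) × B => ψ (v g q.1 q.2)) :
    ∫⁻ p, kernelOp ν K v ψ p ∂(ν.prod θ)
      = ∑' g, ∫⁻ b, ∫⁻ b', (∫⁻ t, ψ (v g (b, t) b') ∂θ) * K g b b' ∂ν ∂ν := by
  have hterm : ∀ g, Measurable fun q : (B × ℝ) × B => ψ (v g q.1 q.2) * K g q.1.1 q.2 :=
    fun g => (hψv g).mul ((hK g).comp (measurable_fst.fst.prodMk measurable_snd))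
  unfold kernelOp
  rw [lintegral_tsum fun g => (hterm g).lintegral_prod_right'.aemeasurable]
  refine tsum_congr fun g => ?_
  rw [lintegral_prod _ (hterm g).lintegral_prod_right'.aemeasurable]
  refine lintegral_congr fun b => ?_
  have hslice : Measurable fun q : ℝ × B => ψ (v g (b, q.1) q.2) * K g b q.2 :=
    (hterm g).comp ((measurable_const.prodMk measurable_fst).prodMk measurable_snd)
  rw [lintegral_lintegral_swap hslice.aemeasurable]
  refine lintegral_congr fun b' => lintegral_mul_const (K g b b') ?_
  exact (hψv g).comp ((measurable_const.prodMk measurable_id).prodMk measurable_const)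

theorem lintegral_kernelOp_W_le [Countable Γ] (θ : Measure ℝ) [SFinite ν] [SFinite θ]
    {K : Γ → B → B → ℝ≥0∞} (hK : ∀ g, Measurable fun q : B × B => K g q.1 q.2)
    {ψ : B × ℝ → ℝ≥0∞} (hψ : Measurable ψ) {c : ℝ≥0∞}
    (h4 : ∀ᵐ b' ∂ν, ∫⁻ b, ∑' g, K g b b' ∂ν ≤ c) :
    ∫⁻ p, kernelOp ν K (fun _ p b' => (b', p.2)) ψ p ∂(ν.prod θ)
      ≤ c * ∫⁻ p, ψ p ∂(ν.prod θ) := by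
  set Ψ : B → ℝ≥0∞ := fun x => ∫⁻ t, ψ (x, t) ∂θ
  have hΨ : Measurable Ψ := hψ.lintegral_prod_right'
  have hKb : ∀ g b', Measurable fun b => K g b b' := fun g b' =>
    (hK g).comp (measurable_id.prodMk measurable_const)
  rw [lintegral_kernelOp θ hK fun g => hψ.comp (by fun_prop), lintegral_prod ψ hψ.aemeasurable]
  calc ∑' g, ∫⁻ b, ∫⁻ b', Ψ b' * K g b b' ∂ν ∂ν
      = ∑' g, ∫⁻ b', Ψ b' * ∫⁻ b, K g b b' ∂ν ∂ν := tsum_congr fun g => by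
        rw [lintegral_lintegral_swap ((hΨ.comp measurable_snd).mul (hK g)).aemeasurable]
        exact lintegral_congr fun b' => lintegral_const_mul _ (hKb g b')
    _ = ∫⁻ b', Ψ b' * ∫⁻ b, ∑' g, K g b b' ∂ν ∂ν := by
        have hI : ∀ g, Measurable fun b' => Ψ b' * ∫⁻ b, K g b b' ∂ν :=
          fun g => hΨ.mul (hK g).lintegral_prod_left'
        rw [← lintegral_tsum fun g => (hI g).aemeasurable]
        refine lintegral_congr fun b' => ?_
        rw [ENNReal.tsum_mul_left, lintegral_tsum fun g => (hKb g b').aemeasurable]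
    _ ≤ ∫⁻ b', Ψ b' * c ∂ν := lintegral_mono_ae (h4.mono fun b' hb' => by gcongr)
    _ = c * ∫⁻ x, Ψ x ∂ν := by rw [lintegral_mul_const _ hΨ, mul_comm]

section Shifted

variable [Group Γ] [Countable Γ] [IsFiniteMeasure ν] {a : Γ → B → B}
  (hact : IsNonsingularAction a ν) {R : Γ → B → ℝ} (hR : ∀ g, Measurable (R g))
  {θ : Measure ℝ} [IsFiniteMeasure θ] (hθ : θ ≪ volume ∧ volume ≪ θ) {C C' : ℝ}
  (hθshift : ∀ t₀ : ℝ, |t₀| ≤ C →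
    ∀ᵐ r ∂θ, (θ.map (fun s => s - t₀)).rnDeriv θ r ≤ ENNReal.ofReal C')
  {K : Γ → B → B → ℝ≥0∞} (hK : ∀ g, Measurable fun q : B × B => K g q.1 q.2)
  (hsupp : ∀ g, ∀ᵐ b ∂ν, ∀ᵐ b' ∂ν, K g b b' ≠ 0 → |R g⁻¹ b'| ≤ C)
  {ψ : B × ℝ → ℝ≥0∞} (hψ : Measurable ψ) {c : ℝ≥0∞}
include hact hR hθ hθshift hK hsupp hψ

theorem lintegral_kernelOp_X_le
    (h4 : ∀ᵐ x ∂ν, ∫⁻ b, ∑' g, K g b (a g x) * rnD a ν g x ∂ν ≤ c) :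
    ∫⁻ p, kernelOp ν K (fun g p b' => (a g⁻¹ b', p.2 + R g⁻¹ b')) ψ p ∂(ν.prod θ)
      ≤ ENNReal.ofReal C' * (c * ∫⁻ p, ψ p ∂(ν.prod θ)) := by
  set Ψ : B → ℝ≥0∞ := fun x => ∫⁻ t, ψ (x, t) ∂θ
  have hΨ : Measurable Ψ := hψ.lintegral_prod_right'
  have ha : ∀ g, Measurable (a g) := hact.1
  have hI : ∀ g, Measurable fun b' => ∫⁻ b, K g b b' ∂ν := fun g => (hK g).lintegral_prod_left'
  have hΨI : ∀ g, Measurable fun b' => Ψ (a g⁻¹ b') * ∫⁻ b, K g b b' ∂ν :=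
    fun g => (hΨ.comp (ha g⁻¹)).mul (hI g)
  rw [lintegral_kernelOp θ hK fun g => hψ.comp (by fun_prop), lintegral_prod ψ hψ.aemeasurable]
  calc ∑' g, ∫⁻ b, ∫⁻ b', (∫⁻ t, ψ (a g⁻¹ b', t + R g⁻¹ b') ∂θ) * K g b b' ∂ν ∂ν
      ≤ ∑' g, ∫⁻ b, ∫⁻ b', ENNReal.ofReal C' * Ψ (a g⁻¹ b') * K g b b' ∂ν ∂ν :=
        ENNReal.tsum_le_tsum fun g => lintegral_mono_ae <| (hsupp g).mono fun b hb =>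
          lintegral_mono_ae <| hb.mono fun b' hb' =>
            lintegral_comp_add_right_mul_le hθ hθshift (hψ.comp (by fun_prop)) hb'
    _ = ENNReal.ofReal C' * ∑' g, ∫⁻ b', Ψ (a g⁻¹ b') * ∫⁻ b, K g b b' ∂ν ∂ν := by
        rw [← ENNReal.tsum_mul_left]
        refine tsum_congr fun g => ?_
        rw [lintegral_lintegral_swap ((measurable_const.mul ((hΨ.comp (ha g⁻¹)).comp
            measurable_snd)).mul (hK g)).aemeasurable, ← lintegral_const_mul _ (hΨI g)]
        refine lintegral_congr fun b' => ?_
        rw [← mul_assoc]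
        exact lintegral_const_mul _ ((hK g).comp (measurable_id.prodMk measurable_const))
    _ ≤ ENNReal.ofReal C' * (c * ∫⁻ x, Ψ x ∂ν) := by
        gcongr
        refine tsum_lintegral_comp_inv_mul_le hact hΨ hI ?_
        filter_upwards [h4] with x hx
        rwa [lintegral_tsum_mul_const (F := fun g b => K g b (a g x))
          fun g => (hK g).comp (measurable_id.prodMk measurable_const)] at hx

theorem lintegral_kernelOp_Y_le
    (h4 : ∀ᵐ x ∂ν, ∫⁻ b', ∑' g, K g (a g x) b' * rnD a ν g x ∂ν ≤ c) :
    ∫⁻ p, kernelOp ν K (fun g p b' => (a g⁻¹ p.1, p.2 + R g⁻¹ b')) ψ p ∂(ν.prod θ)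
      ≤ ENNReal.ofReal C' * (c * ∫⁻ p, ψ p ∂(ν.prod θ)) := by
  set Ψ : B → ℝ≥0∞ := fun x => ∫⁻ t, ψ (x, t) ∂θ
  have hΨ : Measurable Ψ := hψ.lintegral_prod_right'
  have ha : ∀ g, Measurable (a g) := hact.1
  have hJ : ∀ g, Measurable fun b => ∫⁻ b', K g b b' ∂ν := fun g => (hK g).lintegral_prod_right'
  have hΨJ : ∀ g, Measurable fun b => Ψ (a g⁻¹ b) * ∫⁻ b', K g b b' ∂ν :=
    fun g => (hΨ.comp (ha g⁻¹)).mul (hJ g)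
  rw [lintegral_kernelOp θ hK fun g => hψ.comp (by fun_prop), lintegral_prod ψ hψ.aemeasurable]
  calc ∑' g, ∫⁻ b, ∫⁻ b', (∫⁻ t, ψ (a g⁻¹ b, t + R g⁻¹ b') ∂θ) * K g b b' ∂ν ∂ν
      ≤ ∑' g, ∫⁻ b, ∫⁻ b', ENNReal.ofReal C' * Ψ (a g⁻¹ b) * K g b b' ∂ν ∂ν :=
        ENNReal.tsum_le_tsum fun g => lintegral_mono_ae <| (hsupp g).mono fun b hb =>
          lintegral_mono_ae <| hb.mono fun b' hb' =>
            lintegral_comp_add_right_mul_le hθ hθshift (hψ.comp (by fun_prop)) hb'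
    _ = ENNReal.ofReal C' * ∑' g, ∫⁻ b, Ψ (a g⁻¹ b) * ∫⁻ b', K g b b' ∂ν ∂ν := by
        rw [← ENNReal.tsum_mul_left]
        refine tsum_congr fun g => ?_
        rw [← lintegral_const_mul _ (hΨJ g)]
        refine lintegral_congr fun b => ?_
        rw [← mul_assoc]
        exact lintegral_const_mul _ ((hK g).comp (measurable_const.prodMk measurable_id))
    _ ≤ ENNReal.ofReal C' * (c * ∫⁻ x, Ψ x ∂ν) := by
        gcongr
        refine tsum_lintegral_comp_inv_mul_le hact hΨ hJ ?_
        filter_upwards [h4] with x hx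
        rwa [lintegral_tsum_mul_const (F := fun g b' => K g (a g x) b')
          fun g => (hK g).comp (measurable_const.prodMk measurable_id)] at hx

end Shifted

end KernelOperators

theorem stmt5_general {Γ B : Type} [Group Γ] [Countable Γ] [MetricSpace B]
    [MeasurableSpace B]
    (ν : Measure B) [IsProbabilityMeasure ν] (a : Γ → B → B)
    (hact : IsNonsingularAction a ν)
    (R : Γ → B → ℝ) (hRmeas : ∀ g : Γ, Measurable (R g))
    (Υ : ℕ → Γ → B → B → ℝ) (C : ℝ) (hadm : IsAdmissibleFamily a ν R Υ C)
    (θ : Measure ℝ) (hθprob : IsProbabilityMeasure θ)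
    (hθeq : θ ≪ (volume : Measure ℝ) ∧ (volume : Measure ℝ) ≪ θ)
    (C' : ℝ)
    (hθshift : ∀ t₀ : ℝ, |t₀| ≤ C →
      ∀ᵐ r ∂θ, (θ.map (fun s => s - t₀)).rnDeriv θ r ≤ ENNReal.ofReal C') :
    ∃ C₁ : ℝ, 0 < C₁ ∧ ∀ (n : ℕ) (f : B × ℝ → ℝ), Integrable f (ν.prod θ) →
      eLpNorm (Wop ν Υ n f) 1 (ν.prod θ) ≤ ENNReal.ofReal C₁ * eLpNorm f 1 (ν.prod θ) ∧
      eLpNorm (Xop a ν R Υ n f) 1 (ν.prod θ) ≤ ENNReal.ofReal C₁ * eLpNorm f 1 (ν.prod θ) ∧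
      eLpNorm (Yop a ν R Υ n f) 1 (ν.prod θ) ≤ ENNReal.ofReal C₁ * eLpNorm f 1 (ν.prod θ) := by
  obtain ⟨-, hΥ, hΥm, -, -, hsupp, C₄, hC₄, h4W, h4X, h4Y⟩ := hadm
  have hmax : 0 < max 1 C' := lt_max_of_lt_left one_pos
  have hW : ENNReal.ofReal C₄ ≤ ENNReal.ofReal (max 1 C' * C₄) :=
    ENNReal.ofReal_le_ofReal (le_mul_of_one_le_left hC₄.le (le_max_left _ _))
  have hXY : ENNReal.ofReal C' * ENNReal.ofReal C₄ ≤ ENNReal.ofReal (max 1 C' * C₄) := by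
    rw [ENNReal.ofReal_mul hmax.le]; gcongr; exact le_max_right _ _
  refine ⟨max 1 C' * C₄, mul_pos hmax hC₄, fun n f hf => ?_⟩
  obtain ⟨ψ, hψ, hfψ, hψf⟩ := hf.aemeasurable.enorm.exists_measurable_ge_ae_eq
  have hK : ∀ g, Measurable fun q : B × B => ENNReal.ofReal (Υ n g q.1 q.2) :=
    fun g => (hΥm n g).ennreal_ofReal
  have hKsupp : ∀ g, ∀ᵐ b ∂ν, ∀ᵐ b' ∂ν, ENNReal.ofReal (Υ n g b b') ≠ 0 → |R g⁻¹ b'| ≤ C :=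
    fun g => (hsupp n g).mono fun b hb => hb.mono fun b' hb' hne =>
      le_add_of_nonneg_left (abs_nonneg _) |>.trans (hb' (ENNReal.ofReal_ne_zero_iff.1 hne))
  rw [eLpNorm_one_eq_lintegral_enorm (f := f), ← lintegral_congr_ae hψf]
  refine ⟨?_, ?_, ?_⟩
  · exact (eLpNorm_one_le_lintegral_kernelOp _ (hΥ n) _ hfψ).trans <|
      (lintegral_kernelOp_W_le θ hK hψ (h4W n)).trans (by gcongr)
  · exact (eLpNorm_one_le_lintegral_kernelOp _ (hΥ n) _ hfψ).trans <|
      (lintegral_kernelOp_X_le hact hRmeas hθeq hθshift hK hKsupp hψ (h4X n)).trans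
        (by rw [← mul_assoc]; gcongr)
  · exact (eLpNorm_one_le_lintegral_kernelOp _ (hΥ n) _ hfψ).trans <|
      (lintegral_kernelOp_Y_le hact hRmeas hθeq hθshift hK hKsupp hψ (h4Y n)).trans
        (by rw [← mul_assoc]; gcongr)

/-- Proposition 3.5 of the paper: the operators `W_n`, `X_n`, `Y_n` are
uniformly bounded on `L¹(ν × θ)`. -/
theorem stmt5 {Γ B : Type} [Group Γ] [Countable Γ] [MetricSpace B] [CompactSpace B]
    [MeasurableSpace B] [BorelSpace B]
    (ν : Measure B) [IsProbabilityMeasure ν] (a : Γ → B → B)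
    (hact : IsNonsingularAction a ν)
    (R : Γ → B → ℝ) (hRmeas : ∀ g : Γ, Measurable (R g))
    (hRcoc : ∀ (g₁ g₂ : Γ) (b : B), R (g₂ * g₁) b = R g₂ (a g₁ b) + R g₁ b)
    (hRrn : ∀ g : Γ, ∀ᵐ b ∂ν, ENNReal.ofReal (Real.exp (R g b)) = rnD a ν g b)
    (Υ : ℕ → Γ → B → B → ℝ) (C : ℝ) (hadm : IsAdmissibleFamily a ν R Υ C)
    (θ : Measure ℝ) (hθprob : IsProbabilityMeasure θ)
    (hθeq : θ ≪ (volume : Measure ℝ) ∧ (volume : Measure ℝ) ≪ θ)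
    (C' : ℝ) (hC' : 0 < C')
    (hθshift : ∀ t₀ : ℝ, |t₀| ≤ C →
      ∀ᵐ r ∂θ, (θ.map (fun s => s - t₀)).rnDeriv θ r ≤ ENNReal.ofReal C') :
    ∃ C₁ : ℝ, 0 < C₁ ∧ ∀ (n : ℕ) (f : B × ℝ → ℝ), Integrable f (ν.prod θ) →
      eLpNorm (Wop ν Υ n f) 1 (ν.prod θ) ≤ ENNReal.ofReal C₁ * eLpNorm f 1 (ν.prod θ) ∧
      eLpNorm (Xop a ν R Υ n f) 1 (ν.prod θ) ≤ ENNReal.ofReal C₁ * eLpNorm f 1 (ν.prod θ) ∧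
      eLpNorm (Yop a ν R Υ n f) 1 (ν.prod θ) ≤ ENNReal.ofReal C₁ * eLpNorm f 1 (ν.prod θ) :=
  stmt5_general ν a hact R hRmeas Υ C hadm θ hθprob hθeq C' hθshift
end

section
/- Let (X,μ) be a finite measure space, n ∈ ℕ, with μ(X) ≥ 2^{−n−1}, and let β be a finite measurable partition of X such that μ(B) ≤ 2^{−n−1} for every B ∈ β. Then there exists a finite measurable partition α of X, each of whose atoms is a union of atoms of β, such that |μ(A) − 2^{−n}| ≤ 2^{−n−1} for every A ∈ α. -/
/-!
Greedy grouping with `c = 2^{-n-1}`: split off a minimal family of atoms whose union has measure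
at least `c`; removing one atom (of measure `≤ c`) drops it below `c`, so the group has measure at
most `2c`. If the whole space has measure above `3c`, the rest still has measure at least `c` and
we recurse; otherwise the whole space is the last group. Every group then has measure in
`[c, 3c]`, i.e. within `c` of `2c = 2^{-n}`.
-/

open MeasureTheory Set ENNReal

section OuterMeasureClass

variable {X F : Type*} [FunLike F (Set X) ℝ≥0∞] [OuterMeasureClass F X] {μ : F}
  {c : ℝ≥0∞}

lemma exists_subset_measure_sUnion_mem_Icc {β : Finset (Set X)} (hc : c ≠ 0)
    (hsmall : ∀ B ∈ β, μ B ≤ c) (hbig : c ≤ μ (⋃₀ ↑β)) :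
    ∃ s ⊆ β, s.Nonempty ∧ μ (⋃₀ ↑s) ∈ Icc c (2 * c) := by
  classical
  obtain ⟨s, hsβ, hs_min⟩ :=
    exists_minimal_le_of_wellFoundedLT (fun s : Finset (Set X) ↦ c ≤ μ (⋃₀ ↑s)) β hbig
  have hs_big : c ≤ μ (⋃₀ ↑s) := hs_min.prop
  obtain ⟨B, hB⟩ : s.Nonempty := by
    rw [Finset.nonempty_iff_ne_empty]
    rintro rfl
    simp [hc] at hs_big
  have h_erase : μ (⋃₀ ↑(s.erase B)) < c :=
    not_le.1 <| hs_min.not_prop_of_lt (Finset.erase_ssubset hB)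
  refine ⟨s, hsβ, ⟨B, hB⟩, hs_big, ?_⟩
  calc μ (⋃₀ ↑s) = μ (B ∪ ⋃₀ ↑(s.erase B)) := by
        rw [← sUnion_insert, ← Finset.coe_insert, Finset.insert_erase hB]
    _ ≤ μ B + μ (⋃₀ ↑(s.erase B)) := measure_union_le _ _
    _ ≤ c + c := add_le_add (hsmall B (hsβ hB)) h_erase.le
    _ = 2 * c := (two_mul c).symm

theorem exists_finpartition_measure_sUnion_mem_Icc [DecidableEq (Set X)] (hc : c ≠ 0)
    (β : Finset (Set X)) (hsmall : ∀ B ∈ β, μ B ≤ c) (hbig : c ≤ μ (⋃₀ ↑β)) :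
    ∃ P : Finpartition β, ∀ s ∈ P.parts, μ (⋃₀ ↑s) ∈ Icc c (3 * c) := by
  induction β using Finset.strongInduction with
  | _ β ih =>
  by_cases h_le : μ (⋃₀ ↑β) ≤ 3 * c
  · have hβ : β ≠ ∅ := by
      rintro rfl
      simp [hc] at hbig
    refine ⟨Finpartition.indiscrete hβ, fun s hs ↦ ?_⟩
    rw [Finpartition.indiscrete_parts, Finset.mem_singleton] at hs
    exact hs ▸ ⟨hbig, h_le⟩
  obtain ⟨s, hsβ, hs_ne, hs_big, hs_le⟩ := exists_subset_measure_sUnion_mem_Icc hc hsmall hbig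
  have h_split : μ (⋃₀ ↑β) ≤ μ (⋃₀ ↑s) + μ (⋃₀ ↑(β \ s)) := by
    calc μ (⋃₀ ↑β) = μ (⋃₀ ↑s ∪ ⋃₀ ↑(β \ s)) := by
          rw [← sUnion_union, ← Finset.coe_union, Finset.union_sdiff_of_subset hsβ]
      _ ≤ _ := measure_union_le _ _
  have h_rest : c ≤ μ (⋃₀ ↑(β \ s)) := by
    by_contra! h_lt
    have hc_top : c ≠ ⊤ := by
      rintro rfl
      simp at h_le
    refine h_le (h_split.trans (le_of_lt ?_))
    calc μ (⋃₀ ↑s) + μ (⋃₀ ↑(β \ s)) < 2 * c + c :=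
          ENNReal.add_lt_add_of_le_of_lt ((hs_le.trans_lt (by finiteness)).ne) hs_le h_lt
      _ = 3 * c := by ring
  obtain ⟨P, hP⟩ := ih (β \ s) (Finset.sdiff_ssubset hsβ hs_ne)
    (fun B hB ↦ hsmall B (Finset.sdiff_subset hB)) h_rest
  refine ⟨P.extend hs_ne.ne_empty Finset.sdiff_disjoint (Finset.sdiff_union_of_subset hsβ),
    fun t ht ↦ ?_⟩
  rw [Finpartition.extend_parts, Finset.mem_insert] at ht
  rcases ht with rfl | ht
  · exact ⟨hs_big, hs_le.trans (by gcongr; norm_num)⟩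
  · exact hP t ht

end OuterMeasureClass

namespace Finpartition

variable {X : Type*} [DecidableEq (Set X)] {β : Finset (Set X)} (P : Finpartition β)

def sUnionParts : Finset (Set X) :=
  P.parts.image fun s : Finset (Set X) ↦ ⋃₀ ↑s

lemma mem_sUnionParts {A : Set X} : A ∈ P.sUnionParts ↔ ∃ s ∈ P.parts, ⋃₀ ↑s = A :=
  Finset.mem_image

lemma pairwiseDisjoint_sUnionParts (hβ : (β : Set (Set X)).PairwiseDisjoint id) :
    (P.sUnionParts : Set (Set X)).PairwiseDisjoint id := by
  rintro _ hA _ hA' hne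
  obtain ⟨s, hs, rfl⟩ := P.mem_sUnionParts.1 hA
  obtain ⟨t, ht, rfl⟩ := P.mem_sUnionParts.1 hA'
  have hst : Disjoint s t := P.disjoint hs ht fun h ↦ hne (h ▸ rfl)
  refine disjoint_sUnion_left.2 fun B hB ↦ disjoint_sUnion_right.2 fun B' hB' ↦ ?_
  exact hβ (P.le hs hB) (P.le ht hB') fun h ↦ Finset.disjoint_left.1 hst hB (h ▸ hB')

lemma sUnion_sUnionParts : ⋃₀ (P.sUnionParts : Set (Set X)) = ⋃₀ ↑β := by
  rw [sUnionParts, Finset.coe_image, sUnion_image, Finset.set_biUnion_coe,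
    ← Finset.sup_set_eq_biUnion]
  exact P.sup_parts_apply (fun s t ↦ by simp [sUnion_union]) (by simp)

end Finpartition

lemma abs_toReal_sub_two_mul_le {x : ℝ≥0∞} {r : ℝ} (hr : 0 ≤ r)
    (hx : x ∈ Icc (ENNReal.ofReal r) (3 * ENNReal.ofReal r)) : |x.toReal - 2 * r| ≤ r := by
  obtain ⟨hlo, hhi⟩ := hx
  rw [← ENNReal.ofReal_ofNat 3, ← ENNReal.ofReal_mul (by norm_num)] at hhi
  have hx_top : x ≠ ⊤ := ne_top_of_le_ne_top ofReal_ne_top hhi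
  have hlo' : r ≤ x.toReal := (ENNReal.ofReal_le_iff_le_toReal hx_top).1 hlo
  have hhi' : x.toReal ≤ 3 * r := ENNReal.toReal_le_of_le_ofReal (by positivity) hhi
  rw [abs_le]
  constructor <;> linarith

theorem stmt11_general {X : Type} [MeasurableSpace X] (μ : Measure X) (n : ℕ)
    (hX : ENNReal.ofReal ((2 : ℝ) ^ (-(n : ℤ) - 1)) ≤ μ Set.univ)
    (β : Finset (Set X))
    (hdisj : ∀ B ∈ β, ∀ B' ∈ β, B ≠ B' → Disjoint B B')
    (hcover : ⋃₀ (β : Set (Set X)) = Set.univ)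
    (hsmall : ∀ B ∈ β, μ B ≤ ENNReal.ofReal ((2 : ℝ) ^ (-(n : ℤ) - 1))) :
    ∃ α : Finset (Set X),
      (∀ A ∈ α, ∀ A' ∈ α, A ≠ A' → Disjoint A A') ∧
      ⋃₀ (α : Set (Set X)) = Set.univ ∧
      (∀ A ∈ α, ∃ s : Finset (Set X), s ⊆ β ∧ A = ⋃₀ (s : Set (Set X))) ∧
      (∀ A ∈ α, |(μ A).toReal - (2 : ℝ) ^ (-(n : ℤ))| ≤ (2 : ℝ) ^ (-(n : ℤ) - 1)) := by
  classical
  have hr : (0 : ℝ) < 2 ^ (-(n : ℤ) - 1) := by positivity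
  have h_two_mul : (2 : ℝ) ^ (-(n : ℤ)) = 2 * 2 ^ (-(n : ℤ) - 1) := by
    rw [← zpow_one_add₀ two_ne_zero]
    ring_nf
  obtain ⟨P, hP⟩ := exists_finpartition_measure_sUnion_mem_Icc
    (ENNReal.ofReal_pos.2 hr).ne' β hsmall (hcover ▸ hX)
  refine ⟨P.sUnionParts,
    fun _ hA _ hA' ↦ P.pairwiseDisjoint_sUnionParts (fun _ hB _ hB' ↦ hdisj _ hB _ hB') hA hA',
    P.sUnion_sUnionParts.trans hcover, ?_, ?_⟩
  all_goals simp only [Finpartition.mem_sUnionParts, forall_exists_index, and_imp]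
  · rintro _ s hs rfl
    exact ⟨s, P.le hs, rfl⟩
  · rintro _ s hs rfl
    rw [h_two_mul]
    exact abs_toReal_sub_two_mul_le hr.le (hP s hs)

/-- partition lemma, Lemma 3.11 of the paper: if `(X,μ)` is a finite
measure space with `μ(X) ≥ 2^{-n-1}` and `β` is a finite measurable partition all of whose
atoms have measure at most `2^{-n-1}`, then there is a coarser finite partition `α` (each
atom of `α` is a union of atoms of `β`) with `|μ(A) − 2^{-n}| ≤ 2^{-n-1}` for all `A ∈ α`. -/
theorem stmt11 {X : Type} [MeasurableSpace X] (μ : Measure X) [IsFiniteMeasure μ] (n : ℕ)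
    (hX : ENNReal.ofReal ((2 : ℝ) ^ (-(n : ℤ) - 1)) ≤ μ Set.univ)
    (β : Finset (Set X))
    (hmeas : ∀ B ∈ β, MeasurableSet B)
    (hdisj : ∀ B ∈ β, ∀ B' ∈ β, B ≠ B' → Disjoint B B')
    (hcover : ⋃₀ (β : Set (Set X)) = Set.univ)
    (hsmall : ∀ B ∈ β, μ B ≤ ENNReal.ofReal ((2 : ℝ) ^ (-(n : ℤ) - 1))) :
    ∃ α : Finset (Set X),
      (∀ A ∈ α, ∀ A' ∈ α, A ≠ A' → Disjoint A A') ∧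
      ⋃₀ (α : Set (Set X)) = Set.univ ∧
      (∀ A ∈ α, ∃ s : Finset (Set X), s ⊆ β ∧ A = ⋃₀ (s : Set (Set X))) ∧
      (∀ A ∈ α, |(μ A).toReal - (2 : ℝ) ^ (-(n : ℤ))| ≤ (2 : ℝ) ^ (-(n : ℤ) - 1)) :=
  stmt11_general μ n hX β hdisj hcover hsmall
end

section
/- Let (X,d) be a δ-hyperbolic metric space and c ≥ 0. Let p,q ∈ X and r_p, r_q > 0 satisfy |r_p − r_q| ≤ d(p,q) − 2c, and let γ : [a,b] → X be a (1,c)-quasi-geodesic with γ(a) = p and γ(b) = q. Then there exists a point x in the image of γ such that B(x, (r_p + r_q − d(p,q))/2 − 2c) ⊆ B(p,r_p) ∩ B(q,r_q) ⊆ B(x, (r_p + r_q − d(p,q))/2 + 6c + 2δ), where B(y,r) = {z ∈ X : d(y,z) ≤ r} denotes the closed ball. -/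
/-!
Take `x = γ(a + s)` with `s = (r_p − r_q + d(p,q))/2`, so that `d(p,x) ≈ s` and
`d(x,q) ≈ d(p,q) − s` up to `O(c)`, and both `r_p − d(p,x)` and `r_q − d(q,x)` are
`(r_p + r_q − d(p,q))/2` up to `O(c)`. The first inclusion is then the triangle inequality.
For the second, `x` lies almost on a geodesic from `p` to `q`, so `(p|q)_x ≤ 3c/2`; the
hyperbolicity inequality at the basepoint `x` then bounds `d(z,x)` for `z` in both balls.
-/

open Filter Set Metric
open scoped Topology

/-- The Gromov product `(x|y)_z = (d(x,z) + d(y,z) − d(x,y))/2`. -/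
noncomputable def gromovProd {X : Type*} [MetricSpace X] (x y z : X) : ℝ :=
  (dist x z + dist y z - dist x y) / 2

/-- `(X,d)` is δ-hyperbolic: `(x|y)_w ≥ min((x|z)_w, (y|z)_w) − δ` for all points. -/
def IsDeltaHyperbolic (X : Type*) [MetricSpace X] (δ : ℝ) : Prop :=
  ∀ x y z w : X, min (gromovProd x z w) (gromovProd y z w) - δ ≤ gromovProd x y w

/-- A Gromov sequence (with respect to the basepoint `z`): `(x_i|x_j)_z → ∞` as
`i, j → ∞`. -/
def IsGromovSeq {X : Type*} [MetricSpace X] (z : X) (x : ℕ → X) : Prop :=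
  Tendsto (fun p : ℕ × ℕ => gromovProd (x p.1) (x p.2) z) atTop atTop

/-- `γ` is a `(1,c)`-quasi-geodesic on the set `s ⊆ ℝ`. -/
def IsQuasiGeodesicOn {X : Type*} [MetricSpace X] (γ : ℝ → X) (s : Set ℝ) (c : ℝ) : Prop :=
  ∀ u ∈ s, ∀ v ∈ s, |u - v| - c ≤ dist (γ u) (γ v) ∧ dist (γ u) (γ v) ≤ |u - v| + c

namespace IsQuasiGeodesicOn

variable {X : Type*} [MetricSpace X] {γ : ℝ → X} {a b c t : ℝ}

theorem abs_dist_sub_le {s : Set ℝ} (hγ : IsQuasiGeodesicOn γ s c) {u v : ℝ}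
    (hu : u ∈ s) (hv : v ∈ s) : |dist (γ u) (γ v) - (|u - v|)| ≤ c :=
  abs_sub_le_iff.mpr ⟨by linarith [(hγ u hu v hv).2], by linarith [(hγ u hu v hv).1]⟩

theorem abs_dist_left_sub_le (hγ : IsQuasiGeodesicOn γ (Icc a b) c) (ht : t ∈ Icc a b) :
    |dist (γ a) (γ t) - (t - a)| ≤ c := by
  have h := hγ.abs_dist_sub_le (left_mem_Icc.mpr (ht.1.trans ht.2)) ht
  rwa [abs_sub_comm a, abs_of_nonneg (sub_nonneg.mpr ht.1)] at h

theorem abs_dist_right_sub_le (hγ : IsQuasiGeodesicOn γ (Icc a b) c) (ht : t ∈ Icc a b) :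
    |dist (γ t) (γ b) - (dist (γ a) (γ b) - (t - a))| ≤ 2 * c := by
  have hb : b ∈ Icc a b := right_mem_Icc.mpr (ht.1.trans ht.2)
  have htb := hγ.abs_dist_sub_le ht hb
  rw [abs_sub_comm t, abs_of_nonneg (sub_nonneg.mpr ht.2), abs_le] at htb
  have hab := abs_le.mp (hγ.abs_dist_left_sub_le hb)
  exact abs_le.mpr ⟨by linarith, by linarith⟩

end IsQuasiGeodesicOn

variable {X : Type*} [MetricSpace X]

theorem closedBall_subset_inter_closedBall {x p q : X} {ρ rp rq : ℝ}
    (hp : ρ + dist p x ≤ rp) (hq : ρ + dist q x ≤ rq) :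
    closedBall x ρ ⊆ closedBall p rp ∩ closedBall q rq := fun z hz =>
  ⟨closedBall_subset_closedBall' (by rwa [dist_comm]) hz,
    closedBall_subset_closedBall' (by rwa [dist_comm]) hz⟩

theorem IsDeltaHyperbolic.inter_closedBall_subset {δ : ℝ} (hX : IsDeltaHyperbolic X δ)
    (x p q : X) (rp rq : ℝ) :
    closedBall p rp ∩ closedBall q rq ⊆
      closedBall x (2 * gromovProd p q x + 2 * δ + max (rp - dist p x) (rq - dist q x)) := by
  rintro z ⟨hzp, hzq⟩
  rw [mem_closedBall, dist_comm] at hzp hzq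
  rw [mem_closedBall]
  have hyp := hX p q z x
  rcases min_choice (gromovProd p z x) (gromovProd q z x) with hmin | hmin <;>
    rw [hmin] at hyp <;> simp only [gromovProd] at hyp ⊢
  · linarith [le_max_left (rp - dist p x) (rq - dist q x)]
  · linarith [le_max_right (rp - dist p x) (rq - dist q x)]

theorem stmt14_general {X : Type} [MetricSpace X] (δ c : ℝ) (hc : 0 ≤ c)
    (hX : IsDeltaHyperbolic X δ) (p q : X) (rp rq : ℝ)
    (hsep : |rp - rq| ≤ dist p q - 2 * c)
    (a b : ℝ) (hab : a ≤ b) (γ : ℝ → X) (hγa : γ a = p) (hγb : γ b = q)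
    (hγ : IsQuasiGeodesicOn γ (Set.Icc a b) c) :
    ∃ x ∈ γ '' Set.Icc a b,
      closedBall x ((rp + rq - dist p q) / 2 - 2 * c) ⊆
        closedBall p rp ∩ closedBall q rq ∧
      closedBall p rp ∩ closedBall q rq ⊆
        closedBall x ((rp + rq - dist p q) / 2 + 6 * c + 2 * δ) := by
  obtain ⟨hsep₁, hsep₂⟩ := abs_le.mp hsep
  set s := (rp - rq + dist p q) / 2 with hs
  have hba := abs_le.mp (hγ.abs_dist_left_sub_le (right_mem_Icc.mpr hab))
  rw [hγa, hγb] at hba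
  have ht : a + s ∈ Icc a b := ⟨by linarith, by linarith⟩
  have hpx := abs_le.mp (hγ.abs_dist_left_sub_le ht)
  have hqx := abs_le.mp (hγ.abs_dist_right_sub_le ht)
  rw [hγa] at hpx
  rw [hγa, hγb, dist_comm] at hqx
  set x := γ (a + s)
  refine ⟨x, mem_image_of_mem γ ht,
    closedBall_subset_inter_closedBall (by linarith) (by linarith),
    (hX.inter_closedBall_subset x p q rp rq).trans (closedBall_subset_closedBall ?_)⟩
  have hprod : 2 * gromovProd p q x ≤ 3 * c := by
    rw [gromovProd]; linarith
  have hmax : max (rp - dist p x) (rq - dist q x) ≤ (rp + rq - dist p q) / 2 + 2 * c :=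
    max_le (by linarith) (by linarith)
  linarith

/-- Lemma 5.1 of the paper: in a δ-hyperbolic space, if
`|r_p − r_q| ≤ d(p,q) − 2c` then there is a point `x` on any `(1,c)`-quasi-geodesic from
`p` to `q` with
`B(x, (r_p+r_q−d(p,q))/2 − 2c) ⊆ B(p,r_p) ∩ B(q,r_q) ⊆ B(x, (r_p+r_q−d(p,q))/2 + 6c + 2δ)`. -/
theorem stmt14 {X : Type} [MetricSpace X] (δ c : ℝ) (hδ : 0 < δ) (hc : 0 ≤ c)
    (hX : IsDeltaHyperbolic X δ) (p q : X) (rp rq : ℝ) (hrp : 0 < rp) (hrq : 0 < rq)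
    (hsep : |rp - rq| ≤ dist p q - 2 * c)
    (a b : ℝ) (hab : a ≤ b) (γ : ℝ → X) (hγa : γ a = p) (hγb : γ b = q)
    (hγ : IsQuasiGeodesicOn γ (Set.Icc a b) c) :
    ∃ x ∈ γ '' Set.Icc a b,
      closedBall x ((rp + rq - dist p q) / 2 - 2 * c) ⊆
        closedBall p rp ∩ closedBall q rq ∧
      closedBall p rp ∩ closedBall q rq ⊆
        closedBall x ((rp + rq - dist p q) / 2 + 6 * c + 2 * δ) :=
  stmt14_general δ c hc hX p q rp rq hsep a b hab γ hγa hγb hγ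
end

section
/- Let (Γ,d) be a countable group with a left-invariant metric d such that (Γ,d) is a proper, δ-hyperbolic, uniformly (1,c)-quasi-geodesic metric space. Let {q_n} be a Gromov sequence in Γ and define h : Γ → ℝ by h(z) = liminf_{n→∞} (d(z,q_n) − d(q_n,e)). Then for every r > 0 and every real T ≤ r − 2c there exists x ∈ Γ such that B(x, (r+T)/2 − 2c) ⊆ B(e,r) ∩ {z ∈ Γ : h(z) ≤ T + 4δ} and B(e,r) ∩ {z ∈ Γ : h(z) ≤ T − 4δ} ⊆ B(x, (r+T)/2 + 6c + 2δ). -/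
/-! Put `s = (r - T)/2`. As `d(q_n, e) → ∞`, a `(1,c)`-quasi-geodesic from `e` to `q_n` passes
within `c` of the sphere of radius `s`, at a point `x` with `(x|q_n)_e ≳ s`; the ball of radius
`s + c` being finite, one such `x` serves for infinitely many `n`, and by hyperbolicity
`(x|q_n)_e ≳ s − δ` for all large `n`. Since `h(z) = d(z,e) − 2 limsup_n (z|q_n)_e`, both
inclusions reduce to the inequality `(z|x)_e ≥ min((z|q_n)_e, (x|q_n)_e) − δ`. -/

open Filter Set Metric
open scoped Topology

/-- The horofunction of a Gromov sequence `q`, with basepoint the identity: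
`h(z) = liminf_n (d(z,q_n) − d(q_n,e))`. -/
noncomputable def horofn {Γ : Type*} [Group Γ] [MetricSpace Γ] (q : ℕ → Γ) (z : Γ) : ℝ :=
  Filter.liminf (fun n => dist z (q n) - dist (q n) (1 : Γ)) Filter.atTop

theorem Set.Finite.exists_frequently_of_eventually_exists {ι α : Type*} {F : Set ι}
    (hF : F.Finite) {l : Filter α} [l.NeBot] {p : ι → α → Prop}
    (h : ∀ᶠ a in l, ∃ i ∈ F, p i a) : ∃ i ∈ F, ∃ᶠ a in l, p i a := by
  by_contra! hcon
  obtain ⟨a, ⟨i, hi, hpi⟩, hall⟩ := (h.and ((eventually_all_finite hF).2 hcon)).exists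
  exact hall i hi hpi

section GromovProduct

variable {X : Type*} [MetricSpace X]

lemma gromovProd_comm (x y o : X) : gromovProd x y o = gromovProd y x o := by
  unfold gromovProd; rw [dist_comm x y]; ring

@[simp]
lemma gromovProd_self (x o : X) : gromovProd x x o = dist x o := by
  simp [gromovProd]

lemma dist_eq_gromovProd (x y o : X) :
    dist x y = dist x o + dist y o - 2 * gromovProd x y o := by
  unfold gromovProd; ring

lemma IsDeltaHyperbolic.min_sub_le_gromovProd {δ : ℝ} (h : IsDeltaHyperbolic X δ)
    {x y z w : X} {a b : ℝ} (hxz : a ≤ gromovProd x z w) (hyz : b ≤ gromovProd y z w) :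
    min a b - δ ≤ gromovProd x y w :=
  (sub_le_sub_right (min_le_min hxz hyz) δ).trans (h x y z w)

lemma IsQuasiGeodesicOn.exists_dist_le {γ : ℝ → X} {a b c s : ℝ}
    (hγ : IsQuasiGeodesicOn γ (Icc a b) c) (hab : a ≤ b) (hs : 0 ≤ s)
    (hsd : s + c ≤ dist (γ a) (γ b)) :
    ∃ x, dist x (γ a) ≤ s + c ∧ dist x (γ b) ≤ dist (γ a) (γ b) - s + 2 * c := by
  have ha : a ∈ Icc a b := ⟨le_rfl, hab⟩
  have hb : b ∈ Icc a b := ⟨hab, le_rfl⟩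
  obtain ⟨hlow, hhigh⟩ := hγ a ha b hb
  rw [abs_sub_comm, abs_of_nonneg (by linarith)] at hlow hhigh
  have hsb : s ≤ b - a := by linarith
  have hmid : a + s ∈ Icc a b := ⟨by linarith, by linarith⟩
  have hxa := (hγ (a + s) hmid a ha).2
  have hxb := (hγ (a + s) hmid b hb).2
  rw [add_sub_cancel_left, abs_of_nonneg hs] at hxa
  rw [abs_sub_comm, abs_of_nonneg (by linarith)] at hxb
  exact ⟨γ (a + s), hxa, by linarith⟩

end GromovProduct

namespace IsGromovSeq

variable {X : Type*} [MetricSpace X] {o : X} {q : ℕ → X}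

lemma eventually_eventually_le_gromovProd (hq : IsGromovSeq o q) (K : ℝ) :
    ∀ᶠ i in atTop, ∀ᶠ j in atTop, K ≤ gromovProd (q i) (q j) o := by
  have h := hq.eventually_ge_atTop K
  rw [← prod_atTop_atTop_eq] at h
  exact h.curry

lemma tendsto_dist (hq : IsGromovSeq o q) : Tendsto (fun n => dist (q n) o) atTop atTop :=
  (hq.comp tendsto_atTop_diagonal).congr fun n => gromovProd_self (q n) o

lemma eventually_le_gromovProd_of_frequently {δ : ℝ} (hhyp : IsDeltaHyperbolic X δ)
    (hq : IsGromovSeq o q) {x : X} {K : ℝ} (hx : ∃ᶠ n in atTop, K ≤ gromovProd x (q n) o) :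
    ∀ᶠ m in atTop, K - δ ≤ gromovProd x (q m) o := by
  filter_upwards [hq.eventually_eventually_le_gromovProd K] with m hm
  obtain ⟨n, hxn, hmn⟩ := (hx.and_eventually hm).exists
  simpa using hhyp.min_sub_le_gromovProd hxn hmn

lemma exists_dist_mem_Icc_frequently_le_gromovProd (hq : IsGromovSeq o q) {c s : ℝ}
    (hs : 0 ≤ s) (hball : (closedBall o (s + c)).Finite)
    (hqg : ∀ y : X, ∃ (a b : ℝ) (γ : ℝ → X), a ≤ b ∧ γ a = o ∧ γ b = y ∧
      IsQuasiGeodesicOn γ (Icc a b) c) :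
    ∃ x, dist x o ∈ Icc (s - 2 * c) (s + c) ∧
      ∃ᶠ n in atTop, (dist x o + s) / 2 - c ≤ gromovProd x (q n) o := by
  have hnear : ∀ᶠ n in atTop, ∃ x ∈ closedBall o (s + c),
      dist x (q n) ≤ dist (q n) o - s + 2 * c := by
    filter_upwards [hq.tendsto_dist.eventually_ge_atTop (s + c)] with n hn
    obtain ⟨a, b, γ, hab, ha, hb, hγ⟩ := hqg (q n)
    rw [← ha, ← hb, dist_comm] at hn ⊢
    exact hγ.exists_dist_le hab hs hn
  obtain ⟨x, hx, hxq⟩ := hball.exists_frequently_of_eventually_exists hnear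
  obtain ⟨n, hn⟩ := hxq.exists
  refine ⟨x, ⟨?_, hx⟩, hxq.mono fun m hm => ?_⟩
  · linarith [dist_triangle (q n) x o, dist_comm x (q n)]
  · linarith [dist_eq_gromovProd x (q m) o]

end IsGromovSeq

section Horofunction

variable {Γ : Type*} [Group Γ] [MetricSpace Γ] {q : ℕ → Γ} {z : Γ}

lemma horofn_le_of_eventually_le_gromovProd {K : ℝ}
    (hK : ∀ᶠ n in atTop, K ≤ gromovProd z (q n) 1) : horofn q z ≤ dist z 1 - 2 * K := by
  have hbdd : IsBoundedUnder (· ≥ ·) atTop fun n => dist z (q n) - dist (q n) 1 :=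
    isBoundedUnder_of ⟨-dist z 1, fun n => by
      linarith [dist_triangle (q n) z 1, dist_comm z (q n)]⟩
  refine liminf_le_of_frequently_le (hK.mono fun n hn => ?_).frequently hbdd
  linarith [dist_eq_gromovProd z (q n) 1]

lemma frequently_le_gromovProd_of_horofn_lt {t : ℝ} (h : horofn q z < t) :
    ∃ᶠ n in atTop, (dist z 1 - t) / 2 ≤ gromovProd z (q n) 1 := by
  have hbdd : IsBoundedUnder (· ≤ ·) atTop fun n => dist z (q n) - dist (q n) 1 :=
    isBoundedUnder_of ⟨dist z 1, fun n => by
      linarith [dist_triangle z 1 (q n), dist_comm (1 : Γ) (q n)]⟩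
  refine (frequently_lt_of_liminf_lt hbdd.isCoboundedUnder_ge h).mono fun n hn => ?_
  linarith [dist_eq_gromovProd z (q n) 1]

variable {δ c r T : ℝ} {x : Γ}

lemma closedBall_subset_inter_horofn_le (hδ : 0 ≤ δ) (hc : 0 ≤ c)
    (hhyp : IsDeltaHyperbolic Γ δ) (hq : IsGromovSeq 1 q)
    (hx : dist x 1 ∈ Icc ((r - T) / 2 - 2 * c) ((r - T) / 2 + c))
    (hxq : ∃ᶠ n in atTop, (dist x 1 + (r - T) / 2) / 2 - c ≤ gromovProd x (q n) 1) :
    closedBall x ((r + T) / 2 - 2 * c) ⊆ closedBall 1 r ∩ {z | horofn q z ≤ T + 4 * δ} := by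
  intro z hz
  rw [mem_closedBall] at hz
  obtain ⟨hx_lo, hx_hi⟩ := hx
  have hzq := (hq.eventually_le_gromovProd_of_frequently hhyp hxq).mono fun n hn =>
    hhyp.min_sub_le_gromovProd (le_refl (gromovProd z x 1)) (hn.trans_eq (gromovProd_comm _ _ _))
  have hh := horofn_le_of_eventually_le_gromovProd hzq
  have hzx := dist_eq_gromovProd z x 1
  refine ⟨mem_closedBall.2 (by linarith [dist_triangle z x 1]), show horofn q z ≤ _ from ?_⟩
  rcases min_cases (gromovProd z x 1) ((dist x 1 + (r - T) / 2) / 2 - c - δ) with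
    ⟨hmin, -⟩ | ⟨hmin, -⟩ <;>
  · rw [hmin] at hh
    linarith [dist_triangle z x 1]

lemma inter_horofn_le_subset_closedBall (hδ : 0 < δ) (hc : 0 ≤ c)
    (hhyp : IsDeltaHyperbolic Γ δ) (hq : IsGromovSeq 1 q)
    (hx : dist x 1 ≤ (r - T) / 2 + c)
    (hxq : ∃ᶠ n in atTop, (dist x 1 + (r - T) / 2) / 2 - c ≤ gromovProd x (q n) 1) :
    closedBall 1 r ∩ {z | horofn q z ≤ T - 4 * δ} ⊆
      closedBall x ((r + T) / 2 + 6 * c + 2 * δ) := by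
  rintro z ⟨hz, hzT⟩
  rw [mem_closedBall] at hz ⊢
  have hzq := hq.eventually_le_gromovProd_of_frequently hhyp
    (frequently_le_gromovProd_of_horofn_lt (t := T - 3 * δ) (hzT.trans_lt (by linarith)))
  obtain ⟨n, hxn, hzn⟩ := (hxq.and_eventually hzq).exists
  have hzx := hhyp.min_sub_le_gromovProd hzn hxn
  have hdzx := dist_eq_gromovProd z x 1
  rcases min_cases ((dist z 1 - (T - 3 * δ)) / 2 - δ) ((dist x 1 + (r - T) / 2) / 2 - c) with
    ⟨hmin, -⟩ | ⟨hmin, -⟩ <;>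
  · rw [hmin] at hzx
    linarith

end Horofunction

theorem stmt15_general {Γ : Type} [Group Γ] [MetricSpace Γ]
    (δ c : ℝ) (hδ : 0 < δ) (hc : 0 < c)
    (hproper : ∀ (g : Γ) (r : ℝ), (closedBall g r).Finite)
    (hhyp : IsDeltaHyperbolic Γ δ)
    (hqg : ∀ x y : Γ, ∃ (a b : ℝ) (γ : ℝ → Γ), a ≤ b ∧ γ a = x ∧ γ b = y ∧
      IsQuasiGeodesicOn γ (Set.Icc a b) c)
    (q : ℕ → Γ) (hq : IsGromovSeq (1 : Γ) q) :
    ∀ r : ℝ, 0 < r → ∀ T : ℝ, T ≤ r - 2 * c →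
      ∃ x : Γ,
        closedBall x ((r + T) / 2 - 2 * c) ⊆
          closedBall (1 : Γ) r ∩ {z : Γ | horofn q z ≤ T + 4 * δ} ∧
        closedBall (1 : Γ) r ∩ {z : Γ | horofn q z ≤ T - 4 * δ} ⊆
          closedBall x ((r + T) / 2 + 6 * c + 2 * δ) := by
  intro r _ T hT
  obtain ⟨x, hx, hxq⟩ := hq.exists_dist_mem_Icc_frequently_le_gromovProd
    (s := (r - T) / 2) (by linarith) (hproper 1 _) (hqg 1)
  exact ⟨x, closedBall_subset_inter_horofn_le hδ.le hc.le hhyp hq hx hxq,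
    inter_horofn_le_subset_closedBall hδ hc.le hhyp hq hx.2 hxq⟩

/-- Corollary 5.2 of the paper: in a proper, δ-hyperbolic, uniformly
`(1,c)`-quasi-geodesic group `(Γ,d)` with left-invariant metric, for any horofunction `h`
of a Gromov sequence `{q_n}`, any `r > 0` and `T ≤ r − 2c`, there is `x ∈ Γ` with
`B(x,(r+T)/2 − 2c) ⊆ B(e,r) ∩ {h ≤ T+4δ}` and
`B(e,r) ∩ {h ≤ T−4δ} ⊆ B(x,(r+T)/2 + 6c + 2δ)`. -/
theorem stmt15 {Γ : Type} [Group Γ] [Countable Γ] [MetricSpace Γ]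
    (δ c : ℝ) (hδ : 0 < δ) (hc : 0 < c)
    (hleft : ∀ g x y : Γ, dist (g * x) (g * y) = dist x y)
    (hproper : ∀ (g : Γ) (r : ℝ), (closedBall g r).Finite)
    (hhyp : IsDeltaHyperbolic Γ δ)
    (hqg : ∀ x y : Γ, ∃ (a b : ℝ) (γ : ℝ → Γ), a ≤ b ∧ γ a = x ∧ γ b = y ∧
      IsQuasiGeodesicOn γ (Set.Icc a b) c)
    (q : ℕ → Γ) (hq : IsGromovSeq (1 : Γ) q) :
    ∀ r : ℝ, 0 < r → ∀ T : ℝ, T ≤ r - 2 * c →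
      ∃ x : Γ,
        closedBall x ((r + T) / 2 - 2 * c) ⊆
          closedBall (1 : Γ) r ∩ {z : Γ | horofn q z ≤ T + 4 * δ} ∧
        closedBall (1 : Γ) r ∩ {z : Γ | horofn q z ≤ T - 4 * δ} ⊆
          closedBall x ((r + T) / 2 + 6 * c + 2 * δ) :=
  stmt15_general δ c hδ hc hproper hhyp hqg q hq
end
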